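/- arXiv:1811.03179 — 4 statements merged into one kernel-verified Lean document; each statement's English description precedes it below -/
import Mathlib

section
/- Let Z and X be measurable spaces, let π and π̂ be probability measures on Z, and let ν and ν̂ be probability measures on X. Let G be a nonempty family of measurable maps g : Z → X and let F be a class of measurable functions X → ℝ uniformly bounded by B, such that F is symmetric and the composed class F∘G := {f∘g : f ∈ F, g ∈ G} is symmetric. Suppose ĝ ∈ G satisfies sup_{f∈F} (∫ f∘ĝ dπ̂ − ∫ f dν̂) ≤ sup_{f∈F} (∫ f∘g dπ̂ − ∫ f dν̂) for every g ∈ G. Then for every g ∈ G, writing g_*π for the pushforward measure, d_F(ĝ_*π, ν) ≤ d_F(g_*π, ν) + 2·d_F(ν̂, ν) + d_F(g_*π̂, g_*π) + d_{F∘G}(π̂, π). -/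
open MeasureTheory

/-- Integral probability metric induced by a class `F` of test functions. -/
noncomputable def ipm {Ω : Type*} [MeasurableSpace Ω] (F : Set (Ω → ℝ)) (μ ν : Measure Ω) : ℝ :=
  ⨆ f : F, (∫ x, f.1 x ∂μ - ∫ x, f.1 x ∂ν)

/-- The composed class F ∘ G = { f ∘ g : f ∈ F, g ∈ G }. -/
def compClass {Z X : Type*} (F : Set (X → ℝ)) (G : Set (Z → X)) : Set (Z → ℝ) :=
  {h | ∃ f ∈ F, ∃ g ∈ G, h = f ∘ g}

lemma aux_abs_integral_le {Ω : Type*} [MeasurableSpace Ω] {f : Ω → ℝ} {B : ℝ}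
    (hf : ∀ x, |f x| ≤ B) (μ : Measure Ω) [IsProbabilityMeasure μ] :
    |∫ x, f x ∂μ| ≤ B := by
  have := norm_integral_le_of_norm_le_const (μ := μ) (f := f) (C := B)
    (ae_of_all _ fun x => by simpa using hf x)
  simpa [measure_univ] using this

lemma aux_integrable {Ω : Type*} [MeasurableSpace Ω] {f : Ω → ℝ} {B : ℝ}
    (hm : Measurable f) (hf : ∀ x, |f x| ≤ B) (μ : Measure Ω) [IsFiniteMeasure μ] :
    Integrable f μ :=
  (integrable_const B).mono' hm.aestronglyMeasurable (ae_of_all _ fun x => by simpa using hf x)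

lemma aux_bdd {Ω : Type*} [MeasurableSpace Ω] (F : Set (Ω → ℝ)) {B : ℝ}
    (hFbd : ∀ f ∈ F, ∀ x, |f x| ≤ B) (μ ρ : Measure Ω)
    [IsProbabilityMeasure μ] [IsProbabilityMeasure ρ] :
    BddAbove (Set.range fun f : F => ∫ x, f.1 x ∂μ - ∫ x, f.1 x ∂ρ) := by
  refine ⟨2 * B, ?_⟩
  rintro _ ⟨f, rfl⟩
  have h1 := aux_abs_integral_le (hFbd f.1 f.2) μ
  have h2 := aux_abs_integral_le (hFbd f.1 f.2) ρ
  have := abs_le.mp h1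
  have := abs_le.mp h2
  simp only
  linarith [(abs_le.mp h1).1, (abs_le.mp h1).2, (abs_le.mp h2).1, (abs_le.mp h2).2]

lemma aux_le_ipm {Ω : Type*} [MeasurableSpace Ω] (F : Set (Ω → ℝ)) {B : ℝ}
    (hFbd : ∀ f ∈ F, ∀ x, |f x| ≤ B) (μ ρ : Measure Ω)
    [IsProbabilityMeasure μ] [IsProbabilityMeasure ρ]
    {f : Ω → ℝ} (hf : f ∈ F) :
    ∫ x, f x ∂μ - ∫ x, f x ∂ρ ≤ ipm F μ ρ :=
  le_ciSup (aux_bdd F hFbd μ ρ) ⟨f, hf⟩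

/-- Generalized oracle inequality for GAN estimators with finitely many generator samples. -/
theorem generalized_oracle_inequality {Z X : Type*} [MeasurableSpace Z] [MeasurableSpace X]
    (π πh : Measure Z) [IsProbabilityMeasure π] [IsProbabilityMeasure πh]
    (ν νh : Measure X) [IsProbabilityMeasure ν] [IsProbabilityMeasure νh]
    (G : Set (Z → X)) (hG : G.Nonempty) (hGmeas : ∀ g ∈ G, Measurable g)
    (F : Set (X → ℝ)) (B : ℝ)
    (hFmeas : ∀ f ∈ F, Measurable f)
    (hFbd : ∀ f ∈ F, ∀ x, |f x| ≤ B)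
    (hFsymm : ∀ f ∈ F, (fun x => -f x) ∈ F)
    (hFGsymm : ∀ h ∈ compClass F G, (fun z => -h z) ∈ compClass F G)
    (gh : Z → X) (hgh : gh ∈ G)
    (hopt : ∀ g ∈ G,
      (⨆ f : F, (∫ z, f.1 (gh z) ∂πh - ∫ x, f.1 x ∂νh))
        ≤ ⨆ f : F, (∫ z, f.1 (g z) ∂πh - ∫ x, f.1 x ∂νh)) :
    ∀ g ∈ G,
      ipm F (Measure.map gh π) ν
        ≤ ipm F (Measure.map g π) ν + 2 * ipm F νh ν
          + ipm F (Measure.map g πh) (Measure.map g π)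
          + ipm (compClass F G) πh π := by
  intro g hg
  rcases F.eq_empty_or_nonempty with hF | ⟨f₀, hf₀⟩
  · subst hF
    have hC : compClass (∅ : Set (X → ℝ)) G = ∅ := by
      ext h; simp [compClass]
    haveI : IsEmpty ((∅ : Set (X → ℝ)) : Set (X → ℝ)) := by simp
    simp [ipm, hC, Real.iSup_of_isEmpty]
  haveI : Nonempty F := ⟨⟨f₀, hf₀⟩⟩
  have hgm := hGmeas g hg
  have hghm := hGmeas gh hgh
  haveI : IsProbabilityMeasure (Measure.map g π) := Measure.isProbabilityMeasure_map hgm.aemeasurable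
  haveI : IsProbabilityMeasure (Measure.map g πh) := Measure.isProbabilityMeasure_map hgm.aemeasurable
  -- boundedness / measurability of compClass elements
  have hCbd : ∀ h ∈ compClass F G, ∀ z, |h z| ≤ B := by
    rintro h ⟨f, hf, g', hg', rfl⟩ z
    exact hFbd f hf _
  have hCmeas : ∀ h ∈ compClass F G, Measurable h := by
    rintro h ⟨f, hf, g', hg', rfl⟩
    exact (hFmeas f hf).comp (hGmeas g' hg')
  -- nonnegativity of ipm F νh ν
  have hC0 : 0 ≤ ipm F νh ν := by
    have h1 := aux_le_ipm F hFbd νh ν hf₀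
    have h2 := aux_le_ipm F hFbd νh ν (hFsymm f₀ hf₀)
    have e1 : ∫ x, (fun x => -f₀ x) x ∂νh = -∫ x, f₀ x ∂νh := by simp [integral_neg]
    have e2 : ∫ x, (fun x => -f₀ x) x ∂ν = -∫ x, f₀ x ∂ν := by simp [integral_neg]
    rw [e1, e2] at h2
    linarith
  -- Step 1 : bound ipm F (map gh π) ν
  set T : ℝ := ⨆ f : F, (∫ z, f.1 (gh z) ∂πh - ∫ x, f.1 x ∂νh) with hT
  have step1 : ipm F (Measure.map gh π) ν ≤ ipm (compClass F G) πh π + T + ipm F νh ν := by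
    refine ciSup_le fun f => ?_
    have hfm := hFmeas f.1 f.2
    have hmap : ∫ x, f.1 x ∂(Measure.map gh π) = ∫ z, f.1 (gh z) ∂π :=
      integral_map hghm.aemeasurable hfm.aestronglyMeasurable
    rw [hmap]
    have t1 : ∫ z, f.1 (gh z) ∂π - ∫ z, f.1 (gh z) ∂πh ≤ ipm (compClass F G) πh π := by
      have hmem : (fun z => -(f.1 ∘ gh) z) ∈ compClass F G :=
        hFGsymm _ ⟨f.1, f.2, gh, hgh, rfl⟩
      have h := aux_le_ipm (compClass F G) hCbd πh π hmem
      simp only [Function.comp_apply, integral_neg] at h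
      linarith
    have hbdT : BddAbove (Set.range fun f : F => ∫ z, f.1 (gh z) ∂πh - ∫ x, f.1 x ∂νh) := by
      refine ⟨2 * B, ?_⟩
      rintro _ ⟨f', rfl⟩
      have h1 := aux_abs_integral_le (fun z => hFbd f'.1 f'.2 (gh z)) πh
      have h2 := aux_abs_integral_le (hFbd f'.1 f'.2) νh
      simp only
      linarith [(abs_le.mp h1).1, (abs_le.mp h1).2, (abs_le.mp h2).1, (abs_le.mp h2).2]
    have t2 : ∫ z, f.1 (gh z) ∂πh - ∫ x, f.1 x ∂νh ≤ T := le_ciSup hbdT f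
    have t3 : ∫ x, f.1 x ∂νh - ∫ x, f.1 x ∂ν ≤ ipm F νh ν := aux_le_ipm F hFbd νh ν f.2
    linarith
  -- Step 2 : optimality
  have step2 : T ≤ ⨆ f : F, (∫ z, f.1 (g z) ∂πh - ∫ x, f.1 x ∂νh) := hopt g hg
  -- Step 3 : bound the oracle term
  have step3 : (⨆ f : F, (∫ z, f.1 (g z) ∂πh - ∫ x, f.1 x ∂νh))
      ≤ ipm F (Measure.map g πh) (Measure.map g π) + ipm F (Measure.map g π) ν + ipm F νh ν := by
    refine ciSup_le fun f => ?_
    have hfm := hFmeas f.1 f.2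
    have hmap1 : ∫ x, f.1 x ∂(Measure.map g πh) = ∫ z, f.1 (g z) ∂πh :=
      integral_map hgm.aemeasurable hfm.aestronglyMeasurable
    have hmap2 : ∫ x, f.1 x ∂(Measure.map g π) = ∫ z, f.1 (g z) ∂π :=
      integral_map hgm.aemeasurable hfm.aestronglyMeasurable
    have t1 : ∫ z, f.1 (g z) ∂πh - ∫ z, f.1 (g z) ∂π
        ≤ ipm F (Measure.map g πh) (Measure.map g π) := by
      have := aux_le_ipm F hFbd (Measure.map g πh) (Measure.map g π) f.2
      rwa [hmap1, hmap2] at this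
    have t2 : ∫ z, f.1 (g z) ∂π - ∫ x, f.1 x ∂ν ≤ ipm F (Measure.map g π) ν := by
      have := aux_le_ipm F hFbd (Measure.map g π) ν f.2
      rwa [hmap2] at this
    have t3 : ∫ x, f.1 x ∂ν - ∫ x, f.1 x ∂νh ≤ ipm F νh ν := by
      have := aux_le_ipm F hFbd νh ν (hFsymm f.1 f.2)
      simp only [integral_neg] at this
      linarith
    linarith
  have := step1.trans (by linarith : ipm (compClass F G) πh π + T + ipm F νh ν
    ≤ ipm (compClass F G) πh π
      + (ipm F (Measure.map g πh) (Measure.map g π) + ipm F (Measure.map g π) ν + ipm F νh ν)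
      + ipm F νh ν)
  linarith
end

section
/- Let μ and ν be probability measures on a measurable space that are mutually absolutely continuous, and suppose the log density ratio ℓ := log(dν/dμ) is essentially bounded. Then for every bounded measurable function f, 4·d_TV(ν, μ)² ≤ KL(ν‖μ) + KL(μ‖ν) ≤ 2·ess sup|ℓ − f| + (∫ f dν − ∫ f dμ). -/
open MeasureTheory

/-- Total variation distance between two measures. -/
noncomputable def tvDist {Ω : Type*} [MeasurableSpace Ω] (P Q : Measure Ω) : ℝ :=
  ⨆ A : {A : Set Ω // MeasurableSet A}, |(P A.1).toReal - (Q A.1).toReal|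

/-- Kullback-Leibler divergence KL(ν ‖ μ) = ∫ log (dν/dμ) dν. -/
noncomputable def klDivR {Ω : Type*} [MeasurableSpace Ω] (ν μ : Measure Ω) : ℝ :=
  ∫ x, Real.log ((ν.rnDeriv μ) x).toReal ∂ν

open Set Filter

/-!
Write `ρ = dν/dμ` and `ℓ = log ρ`. Since `dμ/dν = ρ⁻¹`, the symmetrized divergence is
`∫ ℓ dν - ∫ ℓ dμ = ∫ (ρ - 1) ℓ dμ`. For Pinsker, `2 d_TV(ν, μ) ≤ ∫ |ρ - 1| dμ` because `ρ - 1` has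
mean zero, and Cauchy–Schwarz with the weight `(ρ + 1) / 2`, of `μ`-mean one, bounds
`(∫ |ρ - 1| dμ)²` by `∫ 2 (ρ - 1)² / (ρ + 1) dμ`, which is at most `∫ (ρ - 1) ℓ dμ` by the
elementary inequality `2 (t - 1)² / (t + 1) ≤ (t - 1) log t`. For the decomposition, split
`ℓ = (ℓ - f) + f`: the means of `ℓ - f` under `ν ≪ μ` and under `μ` are both bounded in absolute
value by `ess sup |ℓ - f|`.
-/

namespace Real

lemma monotoneOn_add_one_mul_log_sub_two_mul :
    MonotoneOn (fun s : ℝ => (s + 1) * log s - 2 * (s - 1)) (Ioi 0) := by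
  refine monotoneOn_of_hasDerivWithinAt_nonneg (f' := fun s => log s + s⁻¹ - 1)
    (convex_Ioi 0) ?_ (fun s hs => ?_) (fun s hs => ?_)
  · exact ((continuousOn_id.add continuousOn_const).mul
      (continuousOn_log.mono fun s hs => ne_of_gt hs)).sub (by fun_prop)
  · rw [interior_Ioi] at hs
    have h : HasDerivAt (fun s : ℝ => (s + 1) * log s - 2 * (s - 1))
        (1 * log s + (s + 1) * s⁻¹ - 2 * 1) s :=
      (((hasDerivAt_id s).add_const 1).mul (hasDerivAt_log (ne_of_gt hs))).sub
        (((hasDerivAt_id s).sub_const 1).const_mul 2)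
    refine (h.congr_deriv ?_).hasDerivWithinAt
    rw [add_mul, mul_inv_cancel₀ (ne_of_gt hs)]
    ring
  · rw [interior_Ioi] at hs
    have h := log_le_sub_one_of_pos (inv_pos.2 hs)
    rw [log_inv] at h
    linarith

lemma two_mul_sq_div_add_one_le_mul_log {t : ℝ} (ht : 0 < t) :
    2 * (t - 1) ^ 2 / (t + 1) ≤ (t - 1) * log t := by
  rw [div_le_iff₀ (by linarith)]
  -- `(t + 1) log t - 2 (t - 1)` vanishes at `1` and increases, so it has the sign of `t - 1`.
  have one_mem : (1 : ℝ) ∈ Ioi 0 := mem_Ioi.2 zero_lt_one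
  rcases le_total 1 t with h | h
  · have := monotoneOn_add_one_mul_log_sub_two_mul one_mem ht h
    simp only [log_one] at this
    nlinarith
  · have := monotoneOn_add_one_mul_log_sub_two_mul ht one_mem h
    simp only [log_one] at this
    nlinarith

end Real

section

variable {Ω : Type*} [MeasurableSpace Ω] {μ ν : Measure Ω}

lemma sq_integral_mul_le_integral_sq_mul_integral_sq {f g : Ω → ℝ}
    (hf₀ : 0 ≤ᵐ[μ] f) (hg₀ : 0 ≤ᵐ[μ] g) (hf : MemLp f 2 μ) (hg : MemLp g 2 μ) :
    (∫ x, f x * g x ∂μ) ^ 2 ≤ (∫ x, f x ^ 2 ∂μ) * ∫ x, g x ^ 2 ∂μ := by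
  have h := integral_mul_le_Lp_mul_Lq_of_nonneg Real.HolderConjugate.two_two hf₀ hg₀
    (by simpa using hf) (by simpa using hg)
  simp only [Real.rpow_two, ← Real.sqrt_eq_rpow] at h
  have hfg : 0 ≤ ∫ x, f x * g x ∂μ := integral_nonneg_of_ae <| by
    filter_upwards [hf₀, hg₀] with x hfx hgx using mul_nonneg hfx hgx
  calc (∫ x, f x * g x ∂μ) ^ 2 ≤ (√(∫ x, f x ^ 2 ∂μ) * √(∫ x, g x ^ 2 ∂μ)) ^ 2 := by
        gcongr
    _ = _ := by
      rw [mul_pow, Real.sq_sqrt (integral_nonneg fun _ => sq_nonneg _),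
        Real.sq_sqrt (integral_nonneg fun _ => sq_nonneg _)]

lemma sq_integral_le_integral_sq_div_mul_integral {u w : Ω → ℝ} (hu₀ : 0 ≤ᵐ[μ] u)
    (hu : AEStronglyMeasurable u μ) (hw₀ : ∀ᵐ x ∂μ, 0 < w x)
    (huw : Integrable (fun x => u x ^ 2 / w x) μ) (hw : Integrable w μ) :
    (∫ x, u x ∂μ) ^ 2 ≤ (∫ x, u x ^ 2 / w x ∂μ) * ∫ x, w x ∂μ := by
  have hsqrt : AEStronglyMeasurable (fun x => √(w x)) μ :=
    Real.continuous_sqrt.comp_aestronglyMeasurable hw.1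
  have hmul : (fun x => u x / √(w x) * √(w x)) =ᵐ[μ] u := by
    filter_upwards [hw₀] with x hx using div_mul_cancel₀ _ (Real.sqrt_pos.2 hx).ne'
  have hsq_div : (fun x => (u x / √(w x)) ^ 2) =ᵐ[μ] fun x => u x ^ 2 / w x := by
    filter_upwards [hw₀] with x hx using by rw [div_pow, Real.sq_sqrt hx.le]
  have hsq : (fun x => √(w x) ^ 2) =ᵐ[μ] w := by
    filter_upwards [hw₀] with x hx using Real.sq_sqrt hx.le
  have h := sq_integral_mul_le_integral_sq_mul_integral_sq (f := fun x => u x / √(w x))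
    (g := fun x => √(w x))
    (by filter_upwards [hu₀] with x hx using div_nonneg hx (Real.sqrt_nonneg _))
    (ae_of_all _ fun x => Real.sqrt_nonneg _)
    ((memLp_two_iff_integrable_sq (f := fun x => u x / √(w x)) (hu.div₀ hsqrt)).2
      (huw.congr hsq_div.symm))
    ((memLp_two_iff_integrable_sq hsqrt).2 (hw.congr hsq.symm))
  rwa [integral_congr_ae hmul, integral_congr_ae hsq_div, integral_congr_ae hsq] at h

lemma abs_setIntegral_le_integral_abs_div_two {g : Ω → ℝ} (hg : Integrable g μ)
    (hg₀ : ∫ x, g x ∂μ = 0) {A : Set Ω} (hA : MeasurableSet A) :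
    |∫ x in A, g x ∂μ| ≤ (∫ x, |g x| ∂μ) / 2 := by
  have h_compl : ∫ x in A, g x ∂μ = -∫ x in Aᶜ, g x ∂μ := by
    linarith [integral_add_compl hA hg]
  have hA_le := abs_integral_le_integral_abs (f := g) (μ := μ.restrict A)
  have hAc_le := abs_integral_le_integral_abs (f := g) (μ := μ.restrict Aᶜ)
  rw [h_compl, abs_neg] at hA_le ⊢
  linarith [integral_add_compl hA hg.abs]

lemma tvDist_le_integral_abs_toReal_rnDeriv_sub_one_div_two [IsProbabilityMeasure μ]
    [IsProbabilityMeasure ν] (hνμ : ν ≪ μ) :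
    tvDist ν μ ≤ (∫ x, |(ν.rnDeriv μ x).toReal - 1| ∂μ) / 2 := by
  have hρ : Integrable (fun x => (ν.rnDeriv μ x).toReal) μ :=
    Measure.integrable_toReal_rnDeriv
  have hρ₁ : Integrable (fun x => (ν.rnDeriv μ x).toReal - 1) μ :=
    hρ.sub (integrable_const 1)
  have hρ₁_mean : ∫ x, ((ν.rnDeriv μ x).toReal - 1) ∂μ = 0 := by
    simp [integral_sub hρ (integrable_const 1), Measure.integral_toReal_rnDeriv hνμ]
  have : Nonempty {A : Set Ω // MeasurableSet A} := ⟨⟨∅, .empty⟩⟩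
  refine ciSup_le fun ⟨A, hA⟩ => ?_
  have hdiff : (ν A).toReal - (μ A).toReal = ∫ x in A, ((ν.rnDeriv μ x).toReal - 1) ∂μ := by
    rw [integral_sub hρ.integrableOn (integrable_const 1),
      Measure.setIntegral_toReal_rnDeriv hνμ]
    simp [measureReal_def]
  rw [hdiff]
  exact abs_setIntegral_le_integral_abs_div_two hρ₁ hρ₁_mean hA

lemma sq_integral_abs_toReal_rnDeriv_sub_one_le [IsProbabilityMeasure μ]
    [IsProbabilityMeasure ν] (hνμ : ν ≪ μ) (hμν : μ ≪ ν)
    (h_int : Integrable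
      (fun x => ((ν.rnDeriv μ x).toReal - 1) * Real.log (ν.rnDeriv μ x).toReal) μ) :
    (∫ x, |(ν.rnDeriv μ x).toReal - 1| ∂μ) ^ 2
      ≤ ∫ x, ((ν.rnDeriv μ x).toReal - 1) * Real.log (ν.rnDeriv μ x).toReal ∂μ := by
  set ρ : Ω → ℝ := fun x => (ν.rnDeriv μ x).toReal
  have hρ_meas : Measurable ρ := (Measure.measurable_rnDeriv ν μ).ennreal_toReal
  have hρ_pos : ∀ᵐ x ∂μ, 0 < ρ x := by
    filter_upwards [Measure.rnDeriv_pos' hμν, Measure.rnDeriv_lt_top ν μ] with x h0 htop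
    exact ENNReal.toReal_pos h0.ne' htop.ne
  have hρ_int : Integrable ρ μ := Measure.integrable_toReal_rnDeriv
  have h_pointwise : ∀ᵐ x ∂μ,
      |ρ x - 1| ^ 2 / ((ρ x + 1) / 2) ≤ (ρ x - 1) * Real.log (ρ x) := by
    filter_upwards [hρ_pos] with x hx
    rw [sq_abs, div_div_eq_mul_div, mul_comm]
    exact Real.two_mul_sq_div_add_one_le_mul_log hx
  have h_weight : ∫ x, (ρ x + 1) / 2 ∂μ = 1 := by
    rw [integral_div, integral_add hρ_int (integrable_const 1),
      Measure.integral_toReal_rnDeriv hνμ]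
    simp
  have h_lhs_int : Integrable (fun x => |ρ x - 1| ^ 2 / ((ρ x + 1) / 2)) μ :=
    h_int.mono' (Measurable.aestronglyMeasurable (by fun_prop)) <| by
      filter_upwards [h_pointwise] with x hx
      rwa [Real.norm_of_nonneg (by positivity)]
  have h_cs := sq_integral_le_integral_sq_div_mul_integral (w := fun x => (ρ x + 1) / 2)
    (ae_of_all _ fun x => abs_nonneg (ρ x - 1)) (hρ_meas.sub_const 1).abs.aestronglyMeasurable
    (by filter_upwards [hρ_pos] with x hx using by positivity) h_lhs_int
    ((hρ_int.add (integrable_const 1)).div_const 2)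
  rw [h_weight, mul_one] at h_cs
  exact h_cs.trans (integral_mono_ae h_lhs_int h_int h_pointwise)

lemma klDivR_eq_neg_integral_log_toReal_rnDeriv [SigmaFinite μ] [SigmaFinite ν]
    (hμν : μ ≪ ν) :
    klDivR μ ν = -∫ x, Real.log (ν.rnDeriv μ x).toReal ∂μ := by
  rw [klDivR, ← integral_neg]
  refine integral_congr_ae ?_
  filter_upwards [Measure.inv_rnDeriv' hμν] with x hx
  rw [← hx, Pi.inv_apply, ENNReal.toReal_inv, Real.log_inv]

lemma klDivR_add_klDivR_eq [SigmaFinite μ] [SigmaFinite ν] (hμν : μ ≪ ν) :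
    klDivR ν μ + klDivR μ ν
      = ∫ x, Real.log (ν.rnDeriv μ x).toReal ∂ν - ∫ x, Real.log (ν.rnDeriv μ x).toReal ∂μ := by
  rw [klDivR_eq_neg_integral_log_toReal_rnDeriv hμν, klDivR, sub_eq_add_neg]

theorem four_mul_tvDist_sq_le_klDivR_add_klDivR [IsProbabilityMeasure μ]
    [IsProbabilityMeasure ν] (hνμ : ν ≪ μ) (hμν : μ ≪ ν)
    (hμ : Integrable (fun x => Real.log (ν.rnDeriv μ x).toReal) μ)
    (hν : Integrable (fun x => Real.log (ν.rnDeriv μ x).toReal) ν) :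
    4 * tvDist ν μ ^ 2 ≤ klDivR ν μ + klDivR μ ν := by
  set ρ : Ω → ℝ := fun x => (ν.rnDeriv μ x).toReal
  have hρℓ : Integrable (fun x => ρ x * Real.log (ρ x)) μ :=
    (integrable_toReal_rnDeriv_mul_iff hνμ).2 hν
  have h_int : Integrable (fun x => (ρ x - 1) * Real.log (ρ x)) μ :=
    (hρℓ.sub hμ).congr (ae_of_all _ fun x => (sub_one_mul _ _).symm)
  have h_sym : klDivR ν μ + klDivR μ ν = ∫ x, (ρ x - 1) * Real.log (ρ x) ∂μ := by
    rw [klDivR_add_klDivR_eq hμν, ← integral_toReal_rnDeriv_mul hνμ,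
      ← integral_sub hρℓ hμ]
    exact integral_congr_ae (ae_of_all _ fun x => (sub_one_mul _ _).symm)
  have h_tv := tvDist_le_integral_abs_toReal_rnDeriv_sub_one_div_two hνμ
  have h_tv₀ : 0 ≤ tvDist ν μ := Real.iSup_nonneg fun _ => abs_nonneg _
  have h_pinsker := sq_integral_abs_toReal_rnDeriv_sub_one_le hνμ hμν h_int
  rw [h_sym]
  nlinarith

lemma integral_le_essSup_abs [IsProbabilityMeasure ν] (hνμ : ν ≪ μ) {g : Ω → ℝ}
    (hg : Integrable g ν) (hbdd : IsBoundedUnder (· ≤ ·) (ae μ) fun x => |g x|) :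
    ∫ x, g x ∂ν ≤ essSup (fun x => |g x|) μ := by
  have h := integral_mono_ae hg (integrable_const (essSup (fun x => |g x|) μ)) <| by
    filter_upwards [hνμ.ae_le (ae_le_essSup hbdd)] with x hx using (le_abs_self (g x)).trans hx
  simpa using h

lemma integral_sub_integral_le_two_mul_essSup_abs_sub_add [IsProbabilityMeasure μ]
    [IsProbabilityMeasure ν] (hνμ : ν ≪ μ) {φ f : Ω → ℝ} (hφν : Integrable φ ν)
    (hφμ : Integrable φ μ) (hfν : Integrable f ν) (hfμ : Integrable f μ)
    (hbdd : IsBoundedUnder (· ≤ ·) (ae μ) fun x => |φ x - f x|) :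
    ∫ x, φ x ∂ν - ∫ x, φ x ∂μ
      ≤ 2 * essSup (fun x => |φ x - f x|) μ + (∫ x, f x ∂ν - ∫ x, f x ∂μ) := by
  have hν := integral_le_essSup_abs (g := fun x => φ x - f x) hνμ (hφν.sub hfν) hbdd
  have h_comm : (fun x => |f x - φ x|) = fun x => |φ x - f x| :=
    funext fun x => abs_sub_comm _ _
  have hμ := integral_le_essSup_abs (g := fun x => f x - φ x) .rfl (hfμ.sub hφμ) (h_comm ▸ hbdd)
  rw [h_comm, integral_sub hfμ hφμ] at hμ
  rw [integral_sub hφν hfν] at hν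
  linarith

end

/-- Symmetrized Pinsker inequality together with the discriminator-approximation
decomposition of the symmetrized KL divergence. -/
theorem pinsker_and_discriminator_decomposition {Ω : Type*} [MeasurableSpace Ω]
    (μ ν : Measure Ω) [IsProbabilityMeasure μ] [IsProbabilityMeasure ν]
    (hνμ : ν ≪ μ) (hμν : μ ≪ ν)
    (C : ℝ) (hbd : ∀ᵐ x ∂μ, |Real.log ((ν.rnDeriv μ) x).toReal| ≤ C)
    (f : Ω → ℝ) (hfm : Measurable f) (Bf : ℝ) (hfb : ∀ x, |f x| ≤ Bf) :
    4 * tvDist ν μ ^ 2 ≤ klDivR ν μ + klDivR μ ν ∧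
    klDivR ν μ + klDivR μ ν
      ≤ 2 * essSup (fun x => |Real.log ((ν.rnDeriv μ) x).toReal - f x|) μ
        + (∫ x, f x ∂ν - ∫ x, f x ∂μ) := by
  have hℓ : Measurable fun x => Real.log (ν.rnDeriv μ x).toReal :=
    (Measure.measurable_rnDeriv ν μ).ennreal_toReal.log
  have hℓμ := Integrable.of_bound hℓ.aestronglyMeasurable C hbd
  have hℓν := Integrable.of_bound hℓ.aestronglyMeasurable C (hνμ.ae_le hbd)
  have hfμ := Integrable.of_bound (μ := μ) hfm.aestronglyMeasurable Bf (ae_of_all _ hfb)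
  have hfν := Integrable.of_bound (μ := ν) hfm.aestronglyMeasurable Bf (ae_of_all _ hfb)
  refine ⟨four_mul_tvDist_sq_le_klDivR_add_klDivR hνμ hμν hℓμ hℓν, ?_⟩
  rw [klDivR_add_klDivR_eq hμν]
  refine integral_sub_integral_le_two_mul_essSup_abs_sub_add hνμ hℓν hℓμ hfν hfμ
    (isBoundedUnder_of_eventually_le (a := C + Bf) ?_)
  filter_upwards [hbd] with x hx using (abs_sub _ _).trans (add_le_add hx (hfb x))
end

section
/- Let λ be a σ-finite measure on a measurable space and let p, q be nonnegative measurable functions with ∫ p dλ = ∫ q dλ = 1, defining probability measures P := p·λ and Q := q·λ. Define r := (√p − √q)/(√p + √q), with r := 0 on the set where p = q = 0. Then d_TV(P, Q)² ≤ ∫ (√p − √q)² dλ = ∫ r·(p − q) dλ, and for every bounded measurable function f, ∫ (√p − √q)² dλ ≤ 2·ess sup|r − f| + ∫ f·(p − q) dλ. -/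
open MeasureTheory

/-!
Write `s = √p`, `t = √q` and `H = ∫ (s - t)²`. Since `|p - q| = |s - t| (s + t)` and
`∫ (s + t)² ≤ 2 ∫ (p + q) = 4`, Cauchy–Schwarz gives `∫ |p - q| ≤ 2 √H`; as `∫ (p - q) = 0`,
`|P A - Q A| ≤ ½ ∫ |p - q| ≤ √H` for every `A`. The identity `(s - t)² = r (p - q)` is pointwise,
and splitting `r = (r - f) + f` with `|(r - f)(p - q)| ≤ ess sup |r - f| · (p + q)` gives the last
bound.
-/

open Real

section Pointwise

variable {a b : ℝ}

lemma sqrt_sub_sqrt_mul_sqrt_add (ha : 0 ≤ a) (hb : 0 ≤ b) :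
    (√a - √b) * (√a + √b) = a - b := by
  linear_combination sq_sqrt ha - sq_sqrt hb

lemma sqrt_sub_sqrt_sq_eq_div_mul_sub (ha : 0 ≤ a) (hb : 0 ≤ b) :
    (√a - √b) ^ 2 = (√a - √b) / (√a + √b) * (a - b) := by
  rw [← sqrt_sub_sqrt_mul_sqrt_add ha hb]
  rcases (add_nonneg (sqrt_nonneg a) (sqrt_nonneg b)).eq_or_lt with hzero | hpos
  · have ha' : √a = 0 := by linarith [sqrt_nonneg a, sqrt_nonneg b]
    have hb' : √b = 0 := by linarith [sqrt_nonneg a, sqrt_nonneg b]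
    simp [ha', hb']
  · field_simp

lemma abs_sqrt_sub_sqrt_div_sqrt_add_le_one (a b : ℝ) : |(√a - √b) / (√a + √b)| ≤ 1 := by
  have hsum : 0 ≤ √a + √b := add_nonneg (sqrt_nonneg a) (sqrt_nonneg b)
  rw [abs_div, abs_of_nonneg hsum]
  refine div_le_one_of_le₀ (abs_sub_le_iff.2 ⟨?_, ?_⟩) hsum <;>
    linarith [sqrt_nonneg a, sqrt_nonneg b]

lemma abs_sub_eq_abs_sqrt_sub_mul_sqrt_add (ha : 0 ≤ a) (hb : 0 ≤ b) :
    |a - b| = |√a - √b| * (√a + √b) := by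
  rw [← sqrt_sub_sqrt_mul_sqrt_add ha hb, abs_mul,
    abs_of_nonneg (add_nonneg (sqrt_nonneg a) (sqrt_nonneg b))]

lemma sqrt_sub_sqrt_sq_le_add (ha : 0 ≤ a) (hb : 0 ≤ b) : (√a - √b) ^ 2 ≤ a + b := by
  nlinarith [sq_sqrt ha, sq_sqrt hb, mul_nonneg (sqrt_nonneg a) (sqrt_nonneg b)]

lemma sqrt_add_sqrt_sq_le_two_mul_add (ha : 0 ≤ a) (hb : 0 ≤ b) :
    (√a + √b) ^ 2 ≤ 2 * (a + b) := by
  nlinarith [sq_sqrt ha, sq_sqrt hb, sq_nonneg (√a - √b)]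

end Pointwise

section Integrals

variable {Ω : Type*} [MeasurableSpace Ω] {μ : Measure Ω}

lemma integral_mul_le_sqrt_integral_sq_mul_sqrt_integral_sq {f g : Ω → ℝ}
    (hf0 : 0 ≤ᵐ[μ] f) (hg0 : 0 ≤ᵐ[μ] g) (hf : MemLp f 2 μ) (hg : MemLp g 2 μ) :
    ∫ x, f x * g x ∂μ ≤ √(∫ x, f x ^ 2 ∂μ) * √(∫ x, g x ^ 2 ∂μ) := by
  have key := integral_mul_le_Lp_mul_Lq_of_nonneg HolderConjugate.two_two hf0 hg0
    (by simpa using hf) (by simpa using hg)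
  simpa only [sqrt_eq_rpow, ← rpow_natCast, Nat.cast_ofNat] using key

variable {p q : Ω → ℝ}

lemma integrable_sqrt_sub_sqrt_sq (hp : Integrable p μ) (hq : Integrable q μ)
    (hp0 : 0 ≤ᵐ[μ] p) (hq0 : 0 ≤ᵐ[μ] q) :
    Integrable (fun x => (√(p x) - √(q x)) ^ 2) μ := by
  refine (hp.add hq).mono' ?_ ?_
  · have := hp.1; have := hq.1; fun_prop
  · filter_upwards [hp0, hq0] with x hpx hqx
    rw [norm_of_nonneg (sq_nonneg _)]
    exact sqrt_sub_sqrt_sq_le_add hpx hqx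

lemma integrable_sqrt_add_sqrt_sq (hp : Integrable p μ) (hq : Integrable q μ)
    (hp0 : 0 ≤ᵐ[μ] p) (hq0 : 0 ≤ᵐ[μ] q) :
    Integrable (fun x => (√(p x) + √(q x)) ^ 2) μ := by
  refine ((hp.add hq).const_mul 2).mono' ?_ ?_
  · have := hp.1; have := hq.1; fun_prop
  · filter_upwards [hp0, hq0] with x hpx hqx
    rw [norm_of_nonneg (sq_nonneg _)]
    exact sqrt_add_sqrt_sq_le_two_mul_add hpx hqx

lemma integral_sqrt_add_sqrt_sq_le (hp : Integrable p μ) (hq : Integrable q μ)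
    (hp0 : 0 ≤ᵐ[μ] p) (hq0 : 0 ≤ᵐ[μ] q) :
    ∫ x, (√(p x) + √(q x)) ^ 2 ∂μ ≤ 2 * (∫ x, p x ∂μ + ∫ x, q x ∂μ) := by
  rw [← integral_add hp hq, ← integral_const_mul]
  refine integral_mono_ae (integrable_sqrt_add_sqrt_sq hp hq hp0 hq0) ((hp.add hq).const_mul 2) ?_
  filter_upwards [hp0, hq0] with x hpx hqx
  exact sqrt_add_sqrt_sq_le_two_mul_add hpx hqx

lemma integral_abs_sub_le_sqrt_mul_sqrt (hp : Integrable p μ) (hq : Integrable q μ)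
    (hp0 : 0 ≤ᵐ[μ] p) (hq0 : 0 ≤ᵐ[μ] q) :
    ∫ x, |p x - q x| ∂μ ≤
      √(∫ x, (√(p x) - √(q x)) ^ 2 ∂μ) * √(∫ x, (√(p x) + √(q x)) ^ 2 ∂μ) := by
  have hs := continuous_sqrt.comp_aestronglyMeasurable hp.1
  have ht := continuous_sqrt.comp_aestronglyMeasurable hq.1
  have hsub : MemLp (fun x => |√(p x) - √(q x)|) 2 μ :=
    (memLp_two_iff_integrable_sq (f := fun x => |√(p x) - √(q x)|) (hs.sub ht).norm).2 <| by
      simpa only [sq_abs] using integrable_sqrt_sub_sqrt_sq hp hq hp0 hq0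
  have hadd : MemLp (fun x => √(p x) + √(q x)) 2 μ :=
    (memLp_two_iff_integrable_sq (hs.add ht)).2 (integrable_sqrt_add_sqrt_sq hp hq hp0 hq0)
  calc ∫ x, |p x - q x| ∂μ = ∫ x, |√(p x) - √(q x)| * (√(p x) + √(q x)) ∂μ := by
        refine integral_congr_ae ?_
        filter_upwards [hp0, hq0] with x hpx hqx
        exact abs_sub_eq_abs_sqrt_sub_mul_sqrt_add hpx hqx
    _ ≤ _ := by
        simpa only [sq_abs] using integral_mul_le_sqrt_integral_sq_mul_sqrt_integral_sq
          (ae_of_all _ fun x => abs_nonneg _)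
          (ae_of_all _ fun x => add_nonneg (sqrt_nonneg _) (sqrt_nonneg _)) hsub hadd

lemma integral_abs_sub_le_two_mul_sqrt_hellinger (hp : Integrable p μ) (hq : Integrable q μ)
    (hp0 : 0 ≤ᵐ[μ] p) (hq0 : 0 ≤ᵐ[μ] q) (hp1 : ∫ x, p x ∂μ = 1) (hq1 : ∫ x, q x ∂μ = 1) :
    ∫ x, |p x - q x| ∂μ ≤ 2 * √(∫ x, (√(p x) - √(q x)) ^ 2 ∂μ) := by
  have hadd : √(∫ x, (√(p x) + √(q x)) ^ 2 ∂μ) ≤ 2 := by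
    rw [sqrt_le_left zero_le_two]
    linarith [integral_sqrt_add_sqrt_sq_le hp hq hp0 hq0]
  calc ∫ x, |p x - q x| ∂μ ≤ _ := integral_abs_sub_le_sqrt_mul_sqrt hp hq hp0 hq0
    _ ≤ √(∫ x, (√(p x) - √(q x)) ^ 2 ∂μ) * 2 := by gcongr
    _ = _ := mul_comm _ _

end Integrals

section TotalVariation

variable {Ω : Type*} [MeasurableSpace Ω] {μ : Measure Ω}

lemma tvDist_nonneg (P Q : Measure Ω) : 0 ≤ tvDist P Q :=
  Real.iSup_nonneg fun _ => abs_nonneg _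

lemma tvDist_le {P Q : Measure Ω} {c : ℝ}
    (h : ∀ A, MeasurableSet A → |(P A).toReal - (Q A).toReal| ≤ c) : tvDist P Q ≤ c :=
  ciSup_le fun A => h A.1 A.2

lemma toReal_withDensity_ofReal_apply {g : Ω → ℝ} (hg : Integrable g μ) (hg0 : 0 ≤ᵐ[μ] g)
    {A : Set Ω} (hA : MeasurableSet A) :
    ((μ.withDensity fun x => ENNReal.ofReal (g x)) A).toReal = ∫ x in A, g x ∂μ := by
  rw [withDensity_apply _ hA,
    integral_eq_lintegral_of_nonneg_ae (ae_restrict_of_ae hg0) hg.1.restrict]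

lemma abs_setIntegral_le_half_integral_abs {g : Ω → ℝ} (hg : Integrable g μ)
    (hg0 : ∫ x, g x ∂μ = 0) {A : Set Ω} (hA : MeasurableSet A) :
    |∫ x in A, g x ∂μ| ≤ (∫ x, |g x| ∂μ) / 2 := by
  have hsplit := integral_add_compl hA hg
  have hsplit_abs := integral_add_compl hA hg.abs
  have hA_le := abs_integral_le_integral_abs (μ := μ.restrict A) (f := g)
  have hAc_le := abs_integral_le_integral_abs (μ := μ.restrict Aᶜ) (f := g)
  rw [show ∫ x in Aᶜ, g x ∂μ = -∫ x in A, g x ∂μ by linarith, abs_neg] at hAc_le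
  linarith

lemma tvDist_withDensity_le_half_integral_abs_sub {p q : Ω → ℝ}
    (hp : Integrable p μ) (hq : Integrable q μ) (hp0 : 0 ≤ᵐ[μ] p) (hq0 : 0 ≤ᵐ[μ] q)
    (hpq : ∫ x, p x ∂μ = ∫ x, q x ∂μ) :
    tvDist (μ.withDensity fun x => ENNReal.ofReal (p x))
        (μ.withDensity fun x => ENNReal.ofReal (q x)) ≤ (∫ x, |p x - q x| ∂μ) / 2 := by
  refine tvDist_le fun A hA => ?_
  rw [toReal_withDensity_ofReal_apply hp hp0 hA, toReal_withDensity_ofReal_apply hq hq0 hA,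
    ← integral_sub hp.integrableOn hq.integrableOn]
  refine abs_setIntegral_le_half_integral_abs (g := fun x => p x - q x) (hp.sub hq) ?_ hA
  rw [integral_sub hp hq, hpq, sub_self]

lemma tvDist_withDensity_sq_le_hellinger {p q : Ω → ℝ}
    (hp : Integrable p μ) (hq : Integrable q μ) (hp0 : 0 ≤ᵐ[μ] p) (hq0 : 0 ≤ᵐ[μ] q)
    (hp1 : ∫ x, p x ∂μ = 1) (hq1 : ∫ x, q x ∂μ = 1) :
    tvDist (μ.withDensity fun x => ENNReal.ofReal (p x))
        (μ.withDensity fun x => ENNReal.ofReal (q x)) ^ 2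
      ≤ ∫ x, (√(p x) - √(q x)) ^ 2 ∂μ := by
  have htv := tvDist_withDensity_le_half_integral_abs_sub hp hq hp0 hq0 (hp1.trans hq1.symm)
  have hl1 := integral_abs_sub_le_two_mul_sqrt_hellinger hp hq hp0 hq0 hp1 hq1
  calc _ ≤ √(∫ x, (√(p x) - √(q x)) ^ 2 ∂μ) ^ 2 :=
        pow_le_pow_left₀ (tvDist_nonneg _ _) (by linarith) 2
    _ = _ := sq_sqrt (integral_nonneg fun _ => sq_nonneg _)

end TotalVariation

section Decomposition

open Filter

variable {Ω : Type*} [MeasurableSpace Ω] {μ : Measure Ω}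

lemma integral_mul_le_essSup_abs_mul_integral {g h k : Ω → ℝ} (hg : AEStronglyMeasurable g μ)
    (hgb : IsBoundedUnder (· ≤ ·) (ae μ) fun x => |g x|) (hh : Integrable h μ)
    (hk : Integrable k μ) (hhk : ∀ᵐ x ∂μ, |h x| ≤ k x) :
    ∫ x, g x * h x ∂μ ≤ essSup (fun x => |g x|) μ * ∫ x, k x ∂μ := by
  have hle := ae_le_essSup hgb
  rw [← integral_const_mul]
  refine integral_mono_ae (hh.bdd_mul hg (by simpa only [norm_eq_abs] using hle))
    (hk.const_mul _) ?_
  filter_upwards [hle, hhk] with x hgx hhx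
  calc g x * h x ≤ |g x| * |h x| := by rw [← abs_mul]; exact le_abs_self _
    _ ≤ _ := mul_le_mul hgx hhx (abs_nonneg _) ((abs_nonneg _).trans hgx)

variable {p q : Ω → ℝ}

lemma integral_sqrt_sub_sqrt_sq_eq (hp0 : 0 ≤ᵐ[μ] p) (hq0 : 0 ≤ᵐ[μ] q) :
    ∫ x, (√(p x) - √(q x)) ^ 2 ∂μ
      = ∫ x, (√(p x) - √(q x)) / (√(p x) + √(q x)) * (p x - q x) ∂μ := by
  refine integral_congr_ae ?_
  filter_upwards [hp0, hq0] with x hpx hqx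
  exact sqrt_sub_sqrt_sq_eq_div_mul_sub hpx hqx

lemma integral_sqrt_sub_sqrt_sq_le_two_mul_essSup_add {f : Ω → ℝ} {C : ℝ}
    (hp : Integrable p μ) (hq : Integrable q μ) (hp0 : 0 ≤ᵐ[μ] p) (hq0 : 0 ≤ᵐ[μ] q)
    (hp1 : ∫ x, p x ∂μ = 1) (hq1 : ∫ x, q x ∂μ = 1)
    (hf : AEStronglyMeasurable f μ) (hfC : ∀ᵐ x ∂μ, |f x| ≤ C) :
    ∫ x, (√(p x) - √(q x)) ^ 2 ∂μ
      ≤ 2 * essSup (fun x => |(√(p x) - √(q x)) / (√(p x) + √(q x)) - f x|) μ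
        + ∫ x, f x * (p x - q x) ∂μ := by
  set r : Ω → ℝ := fun x => (√(p x) - √(q x)) / (√(p x) + √(q x))
  have hr : AEStronglyMeasurable r μ := by
    have := hp.1.aemeasurable; have := hq.1.aemeasurable
    exact (by fun_prop : AEMeasurable r μ).aestronglyMeasurable
  have hrf_bdd : IsBoundedUnder (· ≤ ·) (ae μ) fun x => |r x - f x| := by
    refine isBoundedUnder_of_eventually_le (a := 1 + C) ?_
    filter_upwards [hfC] with x hfx
    linarith [abs_sub (r x) (f x), abs_sqrt_sub_sqrt_div_sqrt_add_le_one (p x) (q x)]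
  have hpq : Integrable (fun x => p x - q x) μ := hp.sub hq
  have hrf_int : Integrable (fun x => (r x - f x) * (p x - q x)) μ :=
    hpq.bdd_mul (hr.sub hf) (by simpa only [norm_eq_abs] using ae_le_essSup hrf_bdd)
  have hf_int : Integrable (fun x => f x * (p x - q x)) μ :=
    hpq.bdd_mul hf (by simpa only [norm_eq_abs] using hfC)
  have hpq_le : ∀ᵐ x ∂μ, |p x - q x| ≤ p x + q x := by
    filter_upwards [hp0, hq0] with x (hpx : 0 ≤ p x) (hqx : 0 ≤ q x)
    exact abs_sub_le_iff.2 ⟨by linarith, by linarith⟩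
  calc ∫ x, (√(p x) - √(q x)) ^ 2 ∂μ = ∫ x, r x * (p x - q x) ∂μ :=
        integral_sqrt_sub_sqrt_sq_eq hp0 hq0
    _ = ∫ x, (r x - f x) * (p x - q x) ∂μ + ∫ x, f x * (p x - q x) ∂μ := by
        rw [← integral_add hrf_int hf_int]
        simp only [← add_mul, sub_add_cancel]
    _ ≤ essSup (fun x => |r x - f x|) μ * ∫ x, (p x + q x) ∂μ + ∫ x, f x * (p x - q x) ∂μ := by
        gcongr
        exact integral_mul_le_essSup_abs_mul_integral (hr.sub hf) hrf_bdd hpq (hp.add hq) hpq_le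
    _ = 2 * essSup (fun x => |r x - f x|) μ + ∫ x, f x * (p x - q x) ∂μ := by
        rw [integral_add hp hq, hp1, hq1]; ring

end Decomposition

theorem hellinger_decomposition_general {Ω : Type*} [MeasurableSpace Ω]
    (lam : Measure Ω)
    (p q : Ω → ℝ)
    (hp0 : ∀ x, 0 ≤ p x) (hq0 : ∀ x, 0 ≤ q x)
    (hpint : ∫ x, p x ∂lam = 1) (hqint : ∫ x, q x ∂lam = 1)
    (f : Ω → ℝ) (hfm : Measurable f) (Bf : ℝ) (hfb : ∀ x, |f x| ≤ Bf) :
    tvDist (lam.withDensity fun x => ENNReal.ofReal (p x))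
        (lam.withDensity fun x => ENNReal.ofReal (q x)) ^ 2
      ≤ ∫ x, (Real.sqrt (p x) - Real.sqrt (q x)) ^ 2 ∂lam ∧
    ∫ x, (Real.sqrt (p x) - Real.sqrt (q x)) ^ 2 ∂lam
      = ∫ x, ((Real.sqrt (p x) - Real.sqrt (q x)) / (Real.sqrt (p x) + Real.sqrt (q x)))
          * (p x - q x) ∂lam ∧
    ∫ x, (Real.sqrt (p x) - Real.sqrt (q x)) ^ 2 ∂lam
      ≤ 2 * essSup (fun x =>
            |(Real.sqrt (p x) - Real.sqrt (q x)) / (Real.sqrt (p x) + Real.sqrt (q x)) - f x|) lam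
        + ∫ x, f x * (p x - q x) ∂lam := by
  have hp : Integrable p lam := .of_integral_ne_zero (by simp [hpint])
  have hq : Integrable q lam := .of_integral_ne_zero (by simp [hqint])
  have hp0' : 0 ≤ᵐ[lam] p := ae_of_all _ hp0
  have hq0' : 0 ≤ᵐ[lam] q := ae_of_all _ hq0
  exact ⟨tvDist_withDensity_sq_le_hellinger hp hq hp0' hq0' hpint hqint,
    integral_sqrt_sub_sqrt_sq_eq hp0' hq0',
    integral_sqrt_sub_sqrt_sq_le_two_mul_essSup_add hp hq hp0' hq0' hpint hqint
      hfm.aestronglyMeasurable (ae_of_all _ hfb)⟩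

/-- Le Cam's inequality (TV ≤ Hellinger), the Hellinger-ratio identity, and the
discriminator-approximation decomposition of the squared Hellinger distance.
Note that in Lean, division by zero equals zero, so the ratio
`(√p − √q)/(√p + √q)` is automatically `0` on the set where `p = q = 0`. -/
theorem hellinger_decomposition {Ω : Type*} [MeasurableSpace Ω]
    (lam : Measure Ω) [SigmaFinite lam]
    (p q : Ω → ℝ) (hp : Measurable p) (hq : Measurable q)
    (hp0 : ∀ x, 0 ≤ p x) (hq0 : ∀ x, 0 ≤ q x)
    (hpint : ∫ x, p x ∂lam = 1) (hqint : ∫ x, q x ∂lam = 1)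
    (f : Ω → ℝ) (hfm : Measurable f) (Bf : ℝ) (hfb : ∀ x, |f x| ≤ Bf) :
    tvDist (lam.withDensity fun x => ENNReal.ofReal (p x))
        (lam.withDensity fun x => ENNReal.ofReal (q x)) ^ 2
      ≤ ∫ x, (Real.sqrt (p x) - Real.sqrt (q x)) ^ 2 ∂lam ∧
    ∫ x, (Real.sqrt (p x) - Real.sqrt (q x)) ^ 2 ∂lam
      = ∫ x, ((Real.sqrt (p x) - Real.sqrt (q x)) / (Real.sqrt (p x) + Real.sqrt (q x)))
          * (p x - q x) ∂lam ∧
    ∫ x, (Real.sqrt (p x) - Real.sqrt (q x)) ^ 2 ∂lam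
      ≤ 2 * essSup (fun x =>
            |(Real.sqrt (p x) - Real.sqrt (q x)) / (Real.sqrt (p x) + Real.sqrt (q x)) - f x|) lam
        + ∫ x, f x * (p x - q x) ∂lam :=
  hellinger_decomposition_general lam p q hp0 hq0 hpint hqint f hfm Bf hfb
end

section
/- Let d ≥ 1 and n ≥ 4 be integers. Let ν₀ be the uniform (Lebesgue) probability measure on [0,1]^d, and let ν₁ be the measure on [0,1]^d with density (with respect to Lebesgue measure) f₁(x) = 3/2 if 0 ≤ x₁ < 2/n, f₁(x) = 1/2 if 2/n ≤ x₁ < 4/n, and f₁(x) = 1 otherwise. Then: (i) ν₁ is a probability measure; (ii) ∫_{[0,1]^d} f₁(x)² dx = 1 + 1/n; (iii) the n-fold product measures satisfy ∫ (dν₁^{⊗n}/dν₀^{⊗n})² dν₀^{⊗n} = (1 + 1/n)^n ≤ e; and (iv) d_TV(ν₁^{⊗n}, ν₀^{⊗n}) ≤ √((e−1)/2). -/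
/-!
The product `ν₁^{⊗n}` has density `g(x) = ∏ᵢ f₁(xᵢ)` with respect to `ν₀^{⊗n}`, so by Fubini its
second moment is `(∫ f₁²)^n`, and `∫ f₁² = 1 + 1/n` because `f₁ = 1 + ½·1_A − ½·1_B` for two
slabs `A, B` of width `2/n` in the first coordinate. For a measurable set `S`, splitting
`∫ (g − 1) = 0` over `S` and `Sᶜ` gives `2|P(S) − Q(S)| ≤ ‖g − 1‖₁ ≤ ‖g − 1‖₂ = √(∫ g² − 1)`,
hence `d_TV ≤ ½ √(e − 1) ≤ √((e − 1)/2)` with no need for Pinsker.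
-/

open MeasureTheory
open scoped Classical

/-- The uniform (Lebesgue) probability measure on the unit cube `[0,1]^d`. -/
noncomputable def nu0 (d : ℕ) : Measure (Fin d → ℝ) :=
  volume.restrict (Set.Icc 0 1)

/-- The perturbed density `f₁` of the two-point lower-bound construction. -/
noncomputable def f1 {d : ℕ} (hd : 0 < d) (n : ℕ) (x : Fin d → ℝ) : ℝ :=
  if 0 ≤ x ⟨0, hd⟩ ∧ x ⟨0, hd⟩ < 2 / (n : ℝ) then 3 / 2
  else if 2 / (n : ℝ) ≤ x ⟨0, hd⟩ ∧ x ⟨0, hd⟩ < 4 / (n : ℝ) then 1 / 2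
  else 1

/-- The perturbed measure `ν₁` with density `f₁` with respect to `ν₀`. -/
noncomputable def nu1 {d : ℕ} (hd : 0 < d) (n : ℕ) : Measure (Fin d → ℝ) :=
  (nu0 d).withDensity fun x => ENNReal.ofReal (f1 hd n x)

instance (d : ℕ) : SigmaFinite (nu0 d) := by
  unfold nu0; infer_instance

instance {d : ℕ} (hd : 0 < d) (n : ℕ) : SigmaFinite (nu1 hd n) := by
  unfold nu1; infer_instance

namespace MeasureTheory

variable {α : Type*} [MeasurableSpace α]

theorem withDensity_ofReal_apply {μ : Measure α} {f : α → ℝ} (hf₀ : ∀ x, 0 ≤ f x)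
    (hf : Integrable f μ) {s : Set α} (hs : MeasurableSet s) :
    μ.withDensity (fun x => ENNReal.ofReal (f x)) s = ENNReal.ofReal (∫ x in s, f x ∂μ) := by
  rw [withDensity_apply _ hs,
    ofReal_integral_eq_lintegral_ofReal hf.restrict (.of_forall hf₀)]

theorem Measure.pi_withDensity_ofReal {ι : Type*} [Fintype ι] {X : ι → Type*}
    [∀ i, MeasurableSpace (X i)] (μ : ∀ i, Measure (X i)) [∀ i, SigmaFinite (μ i)]
    {f : ∀ i, X i → ℝ} (hf₀ : ∀ i x, 0 ≤ f i x) (hf : ∀ i, Integrable (f i) (μ i)) :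
    Measure.pi (fun i => (μ i).withDensity fun x => ENNReal.ofReal (f i x)) =
      (Measure.pi μ).withDensity fun x => ENNReal.ofReal (∏ i, f i (x i)) := by
  refine Measure.pi_eq fun s hs => ?_
  rw [withDensity_ofReal_apply (fun x => Finset.prod_nonneg fun i _ => hf₀ i (x i))
      (Integrable.fintype_prod_dep (μ := μ) hf) (.univ_pi hs), Measure.restrict_pi_pi,
    integral_fintype_prod_eq_prod,
    ENNReal.ofReal_prod_of_nonneg fun i _ => setIntegral_nonneg (hs i) fun x _ => hf₀ i x]
  exact Finset.prod_congr rfl fun i _ => (withDensity_ofReal_apply (hf₀ i) (hf i) (hs i)).symm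

theorem integral_rnDeriv_toReal_sq_of_eq_withDensity {P Q : Measure α} [SigmaFinite Q]
    {g : α → ℝ} (hg₀ : ∀ x, 0 ≤ g x) (hg : Measurable g)
    (hP : P = Q.withDensity fun x => ENNReal.ofReal (g x)) :
    ∫ x, (P.rnDeriv Q x).toReal ^ 2 ∂Q = ∫ x, g x ^ 2 ∂Q := by
  refine integral_congr_ae ?_
  filter_upwards [hP ▸ Measure.rnDeriv_withDensity Q (ENNReal.measurable_ofReal.comp hg)]
    with x hx
  rw [hx, Function.comp_apply, ENNReal.toReal_ofReal (hg₀ x)]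

theorem integral_abs_le_sqrt_integral_sq {μ : Measure α} [IsProbabilityMeasure μ]
    {h : α → ℝ} (hh : MemLp h 2 μ) : ∫ x, |h x| ∂μ ≤ Real.sqrt (∫ x, h x ^ 2 ∂μ) := by
  have hvar := ProbabilityTheory.variance_nonneg |h| μ
  rw [ProbabilityTheory.variance_eq_sub hh.abs] at hvar
  refine Real.le_sqrt_of_sq_le ?_
  simpa only [Pi.pow_apply, Pi.abs_apply, sq_abs, sub_nonneg] using hvar

section TotalVariation

variable {P Q : Measure α} {g : α → ℝ}

theorem measure_toReal_sub_eq_setIntegral_of_eq_withDensity [IsFiniteMeasure Q]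
    (hg₀ : ∀ x, 0 ≤ g x) (hg : Integrable g Q)
    (hP : P = Q.withDensity fun x => ENNReal.ofReal (g x)) {s : Set α} (hs : MeasurableSet s) :
    (P s).toReal - (Q s).toReal = ∫ x in s, (g x - 1) ∂Q := by
  rw [integral_sub hg.restrict (integrable_const 1), setIntegral_const, hP,
    withDensity_ofReal_apply hg₀ hg hs,
    ENNReal.toReal_ofReal (setIntegral_nonneg hs fun x _ => hg₀ x), measureReal_def,
    smul_eq_mul, mul_one]

variable [IsProbabilityMeasure P] [IsProbabilityMeasure Q]

theorem two_mul_abs_measure_toReal_sub_le_of_eq_withDensity (hg₀ : ∀ x, 0 ≤ g x)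
    (hg : Integrable g Q) (hP : P = Q.withDensity fun x => ENNReal.ofReal (g x)) {s : Set α}
    (hs : MeasurableSet s) : 2 * |(P s).toReal - (Q s).toReal| ≤ ∫ x, |g x - 1| ∂Q := by
  have hdiff : ∀ {t}, MeasurableSet t →
      (P t).toReal - (Q t).toReal = ∫ x in t, (g x - 1) ∂Q :=
    measure_toReal_sub_eq_setIntegral_of_eq_withDensity hg₀ hg hP
  -- both measures have mass one, so the discrepancy on `sᶜ` is the opposite of that on `s`
  have hcompl : (P sᶜ).toReal - (Q sᶜ).toReal = -((P s).toReal - (Q s).toReal) := by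
    rw [prob_compl_eq_one_sub hs, prob_compl_eq_one_sub hs,
      ENNReal.toReal_sub_of_le prob_le_one ENNReal.one_ne_top,
      ENNReal.toReal_sub_of_le prob_le_one ENNReal.one_ne_top]
    ring
  have hs_le : |(P s).toReal - (Q s).toReal| ≤ ∫ x in s, |g x - 1| ∂Q := by
    rw [hdiff hs]; exact abs_integral_le_integral_abs
  have hsc_le : |(P s).toReal - (Q s).toReal| ≤ ∫ x in sᶜ, |g x - 1| ∂Q := by
    rw [← abs_neg, ← hcompl, hdiff hs.compl]; exact abs_integral_le_integral_abs
  have hint : Integrable (fun x => |g x - 1|) Q := (hg.sub (integrable_const 1)).abs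
  rw [← integral_add_compl hs hint]
  linarith

theorem tvDist_le_of_eq_withDensity (hg₀ : ∀ x, 0 ≤ g x) (hg : Integrable g Q)
    (hP : P = Q.withDensity fun x => ENNReal.ofReal (g x)) :
    tvDist P Q ≤ (∫ x, |g x - 1| ∂Q) / 2 := by
  have : Nonempty {s : Set α // MeasurableSet s} := ⟨⟨∅, .empty⟩⟩
  refine ciSup_le fun s => ?_
  have := two_mul_abs_measure_toReal_sub_le_of_eq_withDensity hg₀ hg hP s.2
  linarith

theorem tvDist_le_half_sqrt_of_eq_withDensity (hg₀ : ∀ x, 0 ≤ g x) (hg : MemLp g 2 Q)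
    (hP : P = Q.withDensity fun x => ENNReal.ofReal (g x)) :
    tvDist P Q ≤ Real.sqrt (∫ x, g x ^ 2 ∂Q - 1) / 2 := by
  have hg₁ : Integrable g Q := hg.integrable one_le_two
  have hmean : ∫ x, g x ∂Q = 1 := by
    have := measure_toReal_sub_eq_setIntegral_of_eq_withDensity hg₀ hg₁ hP .univ
    rw [measure_univ, measure_univ, sub_self, Measure.restrict_univ,
      integral_sub hg₁ (integrable_const 1)] at this
    simp only [integral_const, probReal_univ, smul_eq_mul, mul_one] at this
    linarith
  have hsq : ∫ x, (g x - 1) ^ 2 ∂Q = ∫ x, g x ^ 2 ∂Q - 1 := by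
    have hvar := ProbabilityTheory.variance_eq_sub hg
    rw [ProbabilityTheory.variance_eq_integral hg.aemeasurable] at hvar
    simpa only [hmean, Pi.pow_apply, one_pow] using hvar
  calc tvDist P Q ≤ (∫ x, |g x - 1| ∂Q) / 2 := tvDist_le_of_eq_withDensity hg₀ hg₁ hP
    _ ≤ Real.sqrt (∫ x, g x ^ 2 ∂Q - 1) / 2 := by
      rw [← hsq]
      gcongr
      exact integral_abs_le_sqrt_integral_sq (hg.sub (memLp_const 1))

end TotalVariation

end MeasureTheory

instance : IsProbabilityMeasure (volume.restrict (Set.Icc (0 : ℝ) 1)) :=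
  ⟨by simp⟩

theorem nu0_eq_pi (d : ℕ) :
    nu0 d = Measure.pi fun _ => volume.restrict (Set.Icc (0 : ℝ) 1) := by
  rw [nu0, ← Set.pi_univ_Icc, volume_pi, Measure.restrict_pi_pi]
  rfl

instance (d : ℕ) : IsProbabilityMeasure (nu0 d) := by
  rw [nu0_eq_pi]; infer_instance

theorem nu0_preimage_eval {d : ℕ} (i : Fin d) {s : Set ℝ} (hs : MeasurableSet s) :
    nu0 d ((fun x => x i) ⁻¹' s) = volume (s ∩ Set.Icc 0 1) := by
  rw [nu0_eq_pi, ← Measure.map_apply (measurable_pi_apply i) hs,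
    (measurePreserving_eval _ i).map_eq, Measure.restrict_apply hs]

def slab {d : ℕ} (hd : 0 < d) (a b : ℝ) : Set (Fin d → ℝ) :=
  (fun x => x ⟨0, hd⟩) ⁻¹' Set.Ico a b

section Slab

variable {d : ℕ} (hd : 0 < d)

theorem measurableSet_slab (a b : ℝ) : MeasurableSet (slab hd a b) :=
  measurable_pi_apply _ measurableSet_Ico

theorem nu0_real_slab {a b : ℝ} (ha : 0 ≤ a) (hab : a ≤ b) (hb : b ≤ 1) :
    (nu0 d).real (slab hd a b) = b - a := by
  rw [measureReal_def, slab, nu0_preimage_eval _ measurableSet_Ico,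
    Set.inter_eq_left.2 (Set.Ico_subset_Icc_self.trans (Set.Icc_subset_Icc ha hb)),
    Real.volume_Ico, ENNReal.toReal_ofReal (sub_nonneg.2 hab)]

theorem comp_f1_eq (n : ℕ) (ψ : ℝ → ℝ) (x : Fin d → ℝ) :
    ψ (f1 hd n x) = ψ 1 + (slab hd 0 (2 / n)).indicator (fun _ => ψ (3 / 2) - ψ 1) x
      + (slab hd (2 / n) (4 / n)).indicator (fun _ => ψ (1 / 2) - ψ 1) x := by
  simp only [f1, slab, Set.indicator, Set.mem_preimage, Set.mem_Ico]
  split_ifs <;> grind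

theorem measurable_f1 (n : ℕ) : Measurable (f1 hd n) :=
  Measurable.ite (measurableSet_slab hd _ _) measurable_const
    (Measurable.ite (measurableSet_slab hd _ _) measurable_const measurable_const)

theorem integrable_indicator_slab (a b c : ℝ) :
    Integrable ((slab hd a b).indicator fun _ => c) (nu0 d) :=
  (integrable_const c).indicator (measurableSet_slab hd a b)

theorem integrable_comp_f1 (n : ℕ) (ψ : ℝ → ℝ) :
    Integrable (fun x => ψ (f1 hd n x)) (nu0 d) := by
  simp_rw [comp_f1_eq hd n ψ]
  exact ((integrable_const _).add (integrable_indicator_slab hd ..)).add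
    (integrable_indicator_slab hd ..)

theorem integral_comp_f1 {n : ℕ} (hn : 4 ≤ n) (ψ : ℝ → ℝ) :
    ∫ x, ψ (f1 hd n x) ∂nu0 d =
      ψ 1 + 2 / n * (ψ (3 / 2) - ψ 1) + 2 / n * (ψ (1 / 2) - ψ 1) := by
  have hn' : (4 : ℝ) ≤ n := by exact_mod_cast hn
  have h₂ : (2 : ℝ) / n ≤ 4 / n := by gcongr; norm_num
  have h₄ : (4 : ℝ) / n ≤ 1 := (div_le_one (by linarith)).2 hn'
  simp_rw [comp_f1_eq hd n ψ]
  have hA := integrable_indicator_slab hd 0 (2 / n) (ψ (3 / 2) - ψ 1)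
  have hB := integrable_indicator_slab hd (2 / n) (4 / n) (ψ (1 / 2) - ψ 1)
  have h1A : Integrable
      (fun x => ψ 1 + (slab hd 0 (2 / n)).indicator (fun _ => ψ (3 / 2) - ψ 1) x) (nu0 d) :=
    (integrable_const _).add hA
  rw [integral_add h1A hB, integral_add (integrable_const _) hA,
    integral_const, integral_indicator_const _ (measurableSet_slab hd _ _),
    integral_indicator_const _ (measurableSet_slab hd _ _),
    nu0_real_slab hd le_rfl (by positivity) (h₂.trans h₄), nu0_real_slab hd (by positivity) h₂ h₄]
  simp only [probReal_univ, smul_eq_mul]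
  ring

theorem f1_nonneg (n : ℕ) (x : Fin d → ℝ) : 0 ≤ f1 hd n x := by
  unfold f1; split_ifs <;> norm_num

theorem integral_f1 {n : ℕ} (hn : 4 ≤ n) : ∫ x, f1 hd n x ∂nu0 d = 1 :=
  (integral_comp_f1 hd hn id).trans (by simp only [id]; ring)

theorem integral_f1_sq {n : ℕ} (hn : 4 ≤ n) : ∫ x, f1 hd n x ^ 2 ∂nu0 d = 1 + 1 / n := by
  rw [integral_comp_f1 hd hn (· ^ 2)]
  ring

end Slab

section TwoPoint

variable {d : ℕ} (hd : 0 < d)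

theorem isProbabilityMeasure_nu1 {n : ℕ} (hn : 4 ≤ n) : IsProbabilityMeasure (nu1 hd n) :=
  ⟨by rw [nu1, withDensity_ofReal_apply (f1_nonneg hd n) (integrable_comp_f1 hd n id) .univ,
    Measure.restrict_univ, integral_f1 hd hn, ENNReal.ofReal_one]⟩

theorem pi_nu1_eq_withDensity (n : ℕ) :
    (Measure.pi fun _ : Fin n => nu1 hd n) =
      (Measure.pi fun _ : Fin n => nu0 d).withDensity
        fun x => ENNReal.ofReal (∏ i, f1 hd n (x i)) :=
  Measure.pi_withDensity_ofReal _ (fun _ => f1_nonneg hd n) fun _ => integrable_comp_f1 hd n id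

theorem measurable_prod_f1 (n : ℕ) :
    Measurable fun x : Fin n → Fin d → ℝ => ∏ i, f1 hd n (x i) :=
  Finset.measurable_prod _ fun i _ => (measurable_f1 hd n).comp (measurable_pi_apply i)

theorem memLp_prod_f1 (n : ℕ) :
    MemLp (fun x : Fin n → Fin d → ℝ => ∏ i, f1 hd n (x i)) 2
      (Measure.pi fun _ : Fin n => nu0 d) := by
  refine (memLp_two_iff_integrable_sq (measurable_prod_f1 hd n).aestronglyMeasurable).2 ?_
  simp_rw [← Finset.prod_pow]
  exact Integrable.fintype_prod fun _ => integrable_comp_f1 hd n (· ^ 2)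

theorem integral_prod_f1_sq {n : ℕ} (hn : 4 ≤ n) :
    ∫ x, (∏ i, f1 hd n (x i)) ^ 2 ∂(Measure.pi fun _ : Fin n => nu0 d) = (1 + 1 / n) ^ n := by
  simp_rw [← Finset.prod_pow]
  rw [integral_fintype_prod_eq_pow (fun y => f1 hd n y ^ 2), integral_f1_sq hd hn,
    Fintype.card_fin]

end TwoPoint

/-- The two-point construction yielding the parametric `n^{-1/2}` lower bound in the
Sobolev GAN minimax theorem. -/
theorem two_point_construction (d n : ℕ) (hd : 0 < d) (hn : 4 ≤ n) :
    IsProbabilityMeasure (nu1 hd n) ∧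
    (∫ x, f1 hd n x ^ 2 ∂(nu0 d)) = 1 + 1 / (n : ℝ) ∧
    (∫ x, (((Measure.pi fun _ : Fin n => nu1 hd n).rnDeriv
          (Measure.pi fun _ : Fin n => nu0 d)) x).toReal ^ 2
        ∂(Measure.pi fun _ : Fin n => nu0 d)) = (1 + 1 / (n : ℝ)) ^ n ∧
    (1 + 1 / (n : ℝ)) ^ n ≤ Real.exp 1 ∧
    tvDist (Measure.pi fun _ : Fin n => nu1 hd n) (Measure.pi fun _ : Fin n => nu0 d)
      ≤ Real.sqrt ((Real.exp 1 - 1) / 2) := by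
  have hν₁ := isProbabilityMeasure_nu1 hd hn
  have hprod₀ (x : Fin n → Fin d → ℝ) : 0 ≤ ∏ i, f1 hd n (x i) :=
    Finset.prod_nonneg fun i _ => f1_nonneg hd n (x i)
  have hexp : (1 + 1 / (n : ℝ)) ^ n ≤ Real.exp 1 := by
    simpa only [one_div] using Real.one_add_inv_pow_le_exp
  refine ⟨hν₁, integral_f1_sq hd hn, ?_, hexp, ?_⟩
  · rw [integral_rnDeriv_toReal_sq_of_eq_withDensity hprod₀ (measurable_prod_f1 hd n)
      (pi_nu1_eq_withDensity hd n), integral_prod_f1_sq hd hn]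
  · have hchi := tvDist_le_half_sqrt_of_eq_withDensity hprod₀ (memLp_prod_f1 hd n)
      (pi_nu1_eq_withDensity hd n)
    rw [integral_prod_f1_sq hd hn] at hchi
    have he : 0 ≤ Real.exp 1 - 1 := by linarith [Real.add_one_le_exp 1]
    calc tvDist _ _ ≤ Real.sqrt ((1 + 1 / (n : ℝ)) ^ n - 1) / 2 := hchi
      _ ≤ Real.sqrt (Real.exp 1 - 1) / 2 := by gcongr
      _ ≤ Real.sqrt ((Real.exp 1 - 1) / 2) := by
        refine Real.le_sqrt_of_sq_le ?_
        rw [div_pow, Real.sq_sqrt he]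
        linarith
end
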